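/- arXiv:1511.08071 — 6 statements merged into one kernel-verified Lean document; each statement's English description precedes it below -/
import Mathlib

section
/- Let d ≥ 1 and let ψ₁, ψ₂ : Fin d → ℂ be unit vectors with diagonal distributions p i = ‖ψ₁ i‖² and q i = ‖ψ₂ i‖². Then the following are equivalent: (a) there exist N ≥ 1 and matrices K : Fin N → Matrix (Fin d) (Fin d) ℂ such that ∑ n, (K n)ᴴ * (K n) = 1, for every n and every diagonal matrix D : Matrix (Fin d) (Fin d) ℂ the matrix (K n) * D * (K n)ᴴ is diagonal, and ∑ n, (K n) * (Matrix.vecMulVec ψ₁ (star ψ₁)) * (K n)ᴴ = Matrix.vecMulVec ψ₂ (star ψ₂); (b) p ≺ q. -/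
/-!
An incoherent Kraus operator has at most one nonzero entry in each column. If the operators `Kₖ`
send `ψ₁ψ₁ᴴ` to the rank-one `ψ₂ψ₂ᴴ`, then `Kₖ ψ₁ = cₖ ψ₂` with `∑ |cₖ|² = 1`. For a set `S` of
`r` coordinates, `Kₖ` maps the restriction of `ψ₁` to `S` into at most `r` coordinates, and
Cauchy–Schwarz bounds `∑_{j ∈ S} |ψ₁ j|²` by the largest `r`-term sum of `|ψ₂|²`.

Conversely, if `p ≺ q` then `p` is a convex combination of the permuted vectors `q ∘ σ`: otherwise
a separating functional `y` would contradict `∑ pᵢ yᵢ ≤ ∑ q_{σ i} yᵢ`, which holds by Abel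
summation for `σ` arranging `q` in the same order as `y`. A convex combination
`p = ∑ₖ tₖ • q ∘ σₖ` is realized by Kraus operators sending `eⱼ` to a multiple of `e_{σₖ j}`.
-/

open Finset Matrix

/-- max over finsets of card k of the sum of entries -/
noncomputable def maxSum {ι : Type*} [Fintype ι] (p : ι → ℝ) (k : ℕ) : ℝ :=
  sSup {x : ℝ | ∃ S : Finset ι, S.card = k ∧ x = ∑ i ∈ S, p i}

/-- majorization: equal total sums, and for each k the max k-term partial sum
of `p` is at most that of `q`. -/
def Maj {ι : Type*} [Fintype ι] (p q : ι → ℝ) : Prop :=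
  (∑ i, p i = ∑ i, q i) ∧ ∀ k : ℕ, maxSum p k ≤ maxSum q k

section MaxSum

variable {ι : Type*} [Fintype ι] {p : ι → ℝ} {k : ℕ}

lemma bddAbove_maxSum_set (p : ι → ℝ) (k : ℕ) :
    BddAbove {x : ℝ | ∃ S : Finset ι, S.card = k ∧ x = ∑ i ∈ S, p i} :=
  ((Set.finite_range fun S : Finset ι => ∑ i ∈ S, p i).subset
    (by rintro x ⟨S, -, rfl⟩; exact ⟨S, rfl⟩)).bddAbove

lemma sum_le_maxSum (p : ι → ℝ) (S : Finset ι) : ∑ i ∈ S, p i ≤ maxSum p S.card :=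
  le_csSup (bddAbove_maxSum_set p _) ⟨S, rfl, rfl⟩

lemma maxSum_le {c : ℝ} (hk : k ≤ Fintype.card ι)
    (h : ∀ S : Finset ι, S.card = k → ∑ i ∈ S, p i ≤ c) : maxSum p k ≤ c := by
  obtain ⟨S₀, -, hS₀⟩ := Finset.exists_subset_card_eq (s := (univ : Finset ι)) hk
  exact csSup_le ⟨_, S₀, hS₀, rfl⟩ (by rintro x ⟨S, hS, rfl⟩; exact h S hS)

lemma maxSum_of_card_lt (hk : Fintype.card ι < k) : maxSum p k = 0 := by
  have : {x : ℝ | ∃ S : Finset ι, S.card = k ∧ x = ∑ i ∈ S, p i} = ∅ :=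
    Set.eq_empty_of_forall_notMem fun x ⟨S, hS, _⟩ => by
      have := S.card_le_univ; omega
  rw [maxSum, this, Real.sSup_empty]

lemma sum_le_maxSum_of_card_le (hp : 0 ≤ p) {T : Finset ι} (hT : T.card ≤ k)
    (hk : k ≤ Fintype.card ι) : ∑ i ∈ T, p i ≤ maxSum p k := by
  obtain ⟨S, hTS, -, rfl⟩ := Finset.exists_subsuperset_card_eq (subset_univ T) hT hk
  exact (sum_le_sum_of_subset_of_nonneg hTS fun i _ _ => hp i).trans (sum_le_maxSum p S)

lemma maxSum_comp_equiv {κ : Type*} [Fintype κ] (e : κ ≃ ι) (p : ι → ℝ) (k : ℕ) :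
    maxSum (p ∘ e) k = maxSum p k := by
  unfold maxSum
  congr 1
  ext x
  constructor
  · rintro ⟨S, hS, rfl⟩
    exact ⟨S.map e.toEmbedding, by simpa using hS, by simp⟩
  · rintro ⟨S, hS, rfl⟩
    refine ⟨S.map e.symm.toEmbedding, by simpa using hS, ?_⟩
    simp [Finset.sum_map]

end MaxSum

lemma sum_le_sum_of_card_eq_of_le {ι : Type*} {w : ι → ℝ} {A B : Finset ι}
    (hcard : A.card = B.card) (h : ∀ a ∈ A, ∀ b ∈ B, w a ≤ w b) :
    ∑ a ∈ A, w a ≤ ∑ b ∈ B, w b := by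
  rcases B.eq_empty_or_nonempty with rfl | hB
  · simp [Finset.card_eq_zero.mp hcard]
  · calc ∑ a ∈ A, w a ≤ A.card • B.inf' hB w :=
          sum_le_card_nsmul _ _ _ fun a ha => le_inf' hB w fun b hb => h a ha b hb
      _ = B.card • B.inf' hB w := by rw [hcard]
      _ ≤ ∑ b ∈ B, w b := card_nsmul_le_sum _ _ _ fun b hb => inf'_le w hb

section Sorted

variable {n : ℕ}

lemma sum_le_sum_filter_lt_of_antitone {f : Fin n → ℝ} (hf : Antitone f) (S : Finset (Fin n)) :
    ∑ i ∈ S, f i ≤ ∑ i : Fin n with i.val < S.card, f i := by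
  set T : Finset (Fin n) := {i | i.val < S.card}
  have hT : T.card = S.card := by
    rw [Fin.card_filter_val_lt]
    exact min_eq_right (card_le_univ S |>.trans_eq (Fintype.card_fin n))
  have hsdiff : (S \ T).card = (T \ S).card := by
    have h1 := card_sdiff_add_card_inter S T
    have h2 := card_sdiff_add_card_inter T S
    rw [inter_comm] at h2; omega
  have hle : ∀ a ∈ S \ T, ∀ b ∈ T \ S, f a ≤ f b := by
    intro a ha b hb
    simp only [T, mem_sdiff, mem_filter, mem_univ, true_and, not_lt] at ha hb
    exact hf (Fin.le_def.mpr (hb.1.le.trans ha.2))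
  have := sum_le_sum_of_card_eq_of_le hsdiff hle
  rw [← sum_inter_add_sum_sdiff S T, ← sum_inter_add_sum_sdiff T S, inter_comm]
  linarith

lemma maxSum_le_sum_filter_lt_of_antitone {f : Fin n → ℝ} (hf : Antitone f) {k : ℕ} (hk : k ≤ n) :
    maxSum f k ≤ ∑ i : Fin n with i.val < k, f i :=
  maxSum_le (by simpa using hk) fun S hS => hS ▸ sum_le_sum_filter_lt_of_antitone hf S

lemma sum_filter_lt_le_maxSum (f : Fin n → ℝ) {k : ℕ} (hk : k ≤ n) :
    ∑ i : Fin n with i.val < k, f i ≤ maxSum f k := by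
  simpa [Fin.card_filter_val_lt, hk] using sum_le_maxSum f {i : Fin n | i.val < k}

lemma sum_filter_lt_eq_sum_range (f : ℕ → ℝ) {k : ℕ} (hk : k ≤ n) :
    ∑ i : Fin n with i.val < k, f i = ∑ m ∈ range k, f m := by
  rw [sum_filter, Fin.sum_univ_eq_sum_range (fun m => if m < k then f m else 0), ← sum_filter]
  congr 1
  ext m
  simp only [mem_filter, mem_range]
  omega

end Sorted

lemma sum_mul_le_sum_mul_of_antitone {n : ℕ} {u a b : Fin n → ℝ} (hu : Antitone u)
    (hpre : ∀ k ≤ n, ∑ i : Fin n with i.val < k, a i ≤ ∑ i : Fin n with i.val < k, b i)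
    (htot : ∑ i, a i = ∑ i, b i) : ∑ i, u i * a i ≤ ∑ i, u i * b i := by
  let U : ℕ → ℝ := fun m => if h : m < n then u ⟨m, h⟩ else 0
  let C : ℕ → ℝ := fun m => if h : m < n then b ⟨m, h⟩ - a ⟨m, h⟩ else 0
  have hC : ∀ i : Fin n, C i = b i - a i := fun i => by simp [C]
  have hprefix : ∀ k ≤ n, 0 ≤ ∑ m ∈ range k, C m := fun k hk => by
    rw [← sum_filter_lt_eq_sum_range C hk]
    simp only [hC, sum_sub_distrib, sub_nonneg]
    exact hpre k hk
  have htotal : ∑ m ∈ range n, C m = 0 := by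
    rw [← Fin.sum_univ_eq_sum_range]
    simp [hC, sum_sub_distrib, htot]
  suffices 0 ≤ ∑ m ∈ range n, U m • C m by
    rw [← Fin.sum_univ_eq_sum_range (fun m => U m • C m)] at this
    simpa [U, hC, mul_sub] using this
  rw [sum_range_by_parts, htotal, smul_zero, zero_sub, neg_nonneg]
  refine sum_nonpos fun i hi => mul_nonpos_of_nonpos_of_nonneg ?_ (hprefix _ ?_)
  · have hi : i + 1 < n := by rw [mem_range] at hi; omega
    simpa [U, hi, Nat.lt_of_succ_lt hi] using hu (Fin.mk_le_mk.mpr (Nat.le_succ i))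
  · rw [mem_range] at hi; omega

lemma antitone_comp_sort_neg {n : ℕ} (f : Fin n → ℝ) : Antitone (f ∘ Tuple.sort (-f)) :=
  fun _ _ hij => neg_le_neg_iff.mp (Tuple.monotone_sort (-f) hij)

theorem Maj.exists_perm_sum_mul_le {n : ℕ} {p q : Fin n → ℝ} (h : Maj p q) (y : Fin n → ℝ) :
    ∃ σ : Equiv.Perm (Fin n), ∑ i, p i * y i ≤ ∑ i, q (σ i) * y i := by
  -- compare `p` sorted along decreasing `y` with `q` sorted decreasingly
  set τ := Tuple.sort (-y)
  set ρ := Tuple.sort (-q)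
  refine ⟨τ.symm.trans ρ, ?_⟩
  rw [← Equiv.sum_comp τ (fun i => p i * y i), ← Equiv.sum_comp τ (fun i => q _ * y i)]
  simp only [Equiv.trans_apply, Equiv.symm_apply_apply, mul_comm _ (y _)]
  refine sum_mul_le_sum_mul_of_antitone (antitone_comp_sort_neg y) (fun k hk => ?_) ?_
  · calc ∑ i : Fin n with i.val < k, p (τ i) ≤ maxSum (p ∘ τ) k := sum_filter_lt_le_maxSum _ hk
      _ = maxSum p k := maxSum_comp_equiv τ p k
      _ ≤ maxSum q k := h.2 k
      _ = maxSum (q ∘ ρ) k := (maxSum_comp_equiv ρ q k).symm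
      _ ≤ ∑ i : Fin n with i.val < k, q (ρ i) :=
        maxSum_le_sum_filter_lt_of_antitone (antitone_comp_sort_neg q) hk
  · rw [Equiv.sum_comp τ p, Equiv.sum_comp ρ q]
    exact h.1

theorem exists_mem_stdSimplex_eq_sum_perm {ι : Type*} [Fintype ι] [DecidableEq ι] {p q : ι → ℝ}
    (h : ∀ y : ι → ℝ, ∃ σ : Equiv.Perm ι, ∑ i, p i * y i ≤ ∑ i, q (σ i) * y i) :
    ∃ t ∈ stdSimplex ℝ (Equiv.Perm ι), p = ∑ σ, t σ • (q ∘ σ) := by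
  let L := Fintype.linearCombination ℝ fun σ : Equiv.Perm ι => q ∘ σ
  suffices p ∈ L '' stdSimplex ℝ (Equiv.Perm ι) by
    obtain ⟨t, ht, rfl⟩ := this
    exact ⟨t, ht, Fintype.linearCombination_apply ℝ _ t⟩
  by_contra hp
  obtain ⟨f, u, hfu, hup⟩ := geometric_hahn_banach_closed_point
    ((convex_stdSimplex ℝ _).linear_image L)
    ((isCompact_stdSimplex ℝ _).image L.continuous_of_finiteDimensional).isClosed hp
  have hf (x : ι → ℝ) := LinearMap.pi_apply_eq_sum_univ (f : (ι → ℝ) →ₗ[ℝ] ℝ) x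
  simp only [smul_eq_mul, ContinuousLinearMap.coe_coe] at hf
  obtain ⟨σ, hσ⟩ := h fun i => f fun j => if i = j then 1 else 0
  have hqσ : L (Pi.single σ 1) = q ∘ σ := by
    simp [L, Fintype.linearCombination_apply, Pi.single_apply]
  have := hfu _ ⟨_, single_mem_stdSimplex ℝ σ, hqσ⟩
  rw [hf] at this hup
  simp only [Function.comp_apply] at this
  linarith

section Incoherent

variable {m n R : Type*} [Fintype n] [Semiring R] [StarRing R]

def IsIncoherent (K : Matrix m n R) : Prop :=
  ∀ D : Matrix n n R, D.IsDiag → (K * D * Kᴴ).IsDiag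

theorem isIncoherent_iff [NoZeroDivisors R] {K : Matrix m n R} :
    IsIncoherent K ↔ ∀ j, {i | K i j ≠ 0}.Subsingleton := by
  classical
  have hconj : ∀ (d : n → R) i i', (K * diagonal d * Kᴴ) i i' = ∑ j, K i j * d j * star (K i' j) :=
    fun d i i' => by rw [mul_apply]; simp only [mul_diagonal, conjTranspose_apply]
  constructor
  · intro hK j i hi i' hi'
    by_contra hne
    have : (K * diagonal (Pi.single j (1 : R)) * Kᴴ) i i' = 0 := hK _ (isDiag_diagonal _) hne
    rw [hconj, sum_eq_single j (fun j' _ hj' => by simp [hj'])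
      (fun h => (h (mem_univ j)).elim)] at this
    simp_all
  · intro hK D hD i i' hne
    rw [← hD.diagonal_diag, hconj]
    refine sum_eq_zero fun j _ => ?_
    by_cases hi : K i j = 0
    · simp [hi]
    · by_cases hi' : K i' j = 0
      · simp [hi']
      · exact (hne (hK j hi hi')).elim

theorem IsIncoherent.exists_card_le_support_mulVec [Fintype m] [NoZeroDivisors R]
    {K : Matrix m n R} (hK : IsIncoherent K) (S : Finset n) :
    ∃ T : Finset m, T.card ≤ S.card ∧
      ∀ w : n → R, (∀ j ∉ S, w j = 0) → ∀ i ∉ T, (K *ᵥ w) i = 0 := by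
  classical
  refine ⟨S.biUnion fun j => {i | K i j ≠ 0}, ?_, fun w hw i hi => ?_⟩
  · refine card_biUnion_le.trans (sum_le_card_nsmul _ _ 1 fun j _ => ?_) |>.trans (by simp)
    exact card_le_one.mpr fun i hi i' hi' =>
      isIncoherent_iff.mp hK j (mem_filter.mp hi).2 (mem_filter.mp hi').2
  · refine sum_eq_zero fun j _ => ?_
    by_cases hj : j ∈ S
    · have : K i j = 0 := by
        by_contra h
        exact hi (mem_biUnion.mpr ⟨j, hj, mem_filter.mpr ⟨mem_univ i, h⟩⟩)
      simp [this]
    · simp [hw j hj]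

end Incoherent

section Kraus

variable {κ m n R : Type*} [Fintype n] [Semiring R] [StarRing R]

lemma mul_vecMulVec_star_mul_conjTranspose (K : Matrix m n R) (v : n → R) :
    K * vecMulVec v (star v) * Kᴴ = vecMulVec (K *ᵥ v) (star (K *ᵥ v)) := by
  rw [mul_vecMulVec, vecMulVec_mul, star_mulVec]

lemma sum_star_mulVec_dotProduct_mulVec [Fintype κ] [Fintype m] [DecidableEq n]
    {K : κ → Matrix m n R} (hK : ∑ k, (K k)ᴴ * K k = 1) (v w : n → R) :
    ∑ k, star (K k *ᵥ v) ⬝ᵥ (K k *ᵥ w) = star v ⬝ᵥ w := by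
  simp_rw [star_mulVec, dotProduct_mulVec, vecMul_vecMul, ← sum_dotProduct, ← vecMul_sum, hK,
    vecMul_one]

end Kraus

open ComplexConjugate in
theorem exists_smul_of_sum_vecMulVec_eq {κ ι 𝕜 : Type*} [Fintype κ] [RCLike 𝕜]
    {v : κ → ι → 𝕜} {ψ : ι → 𝕜} (hψ : ψ ≠ 0)
    (h : ∑ k, vecMulVec (v k) (star (v k)) = vecMulVec ψ (star ψ)) :
    ∃ c : κ → 𝕜, ∑ k, ‖c k‖ ^ 2 = 1 ∧ ∀ k, v k = c k • ψ := by
  obtain ⟨i₀, hi₀⟩ : ∃ i, ψ i ≠ 0 := Function.ne_iff.mp hψ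
  have hE (i j : ι) : ∑ k, v k i * conj (v k j) = ψ i * conj (ψ j) := by
    simpa [Matrix.sum_apply, vecMulVec_apply] using congrFun (congrFun h i) j
  -- the 2 × 2 minors of the Gram matrix `∑ₖ vₖ vₖᴴ = ψ ψᴴ` vanish
  have hminor (i : ι) : ∀ k, v k i * ψ i₀ - v k i₀ * ψ i = 0 := by
    set x := fun k => v k i * ψ i₀ - v k i₀ * ψ i
    have hx : ∑ k, x k * conj (x k) = 0 := by
      have : ∑ k, x k * conj (x k) =
          (∑ k, v k i * conj (v k i)) * (ψ i₀ * conj (ψ i₀))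
            - (∑ k, v k i * conj (v k i₀)) * (ψ i₀ * conj (ψ i))
            - (∑ k, v k i₀ * conj (v k i)) * (ψ i * conj (ψ i₀))
            + (∑ k, v k i₀ * conj (v k i₀)) * (ψ i * conj (ψ i)) := by
        simp only [sum_mul, ← sum_sub_distrib, ← sum_add_distrib]
        exact sum_congr rfl fun k _ => by simp only [x, map_sub, map_mul]; ring
      rw [this, hE, hE, hE, hE]
      ring
    simp_rw [RCLike.mul_conj, ← RCLike.ofReal_pow, ← RCLike.ofReal_sum,
      RCLike.ofReal_eq_zero] at hx
    intro k
    simpa using (sum_eq_zero_iff_of_nonneg fun k _ => by positivity).mp hx k (mem_univ k)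
  refine ⟨fun k => v k i₀ / ψ i₀, ?_, fun k => funext fun i => ?_⟩
  · have hψ₀ : ‖ψ i₀‖ ^ 2 ≠ 0 := by positivity
    have := hE i₀ i₀
    simp_rw [RCLike.mul_conj, ← RCLike.ofReal_pow, ← RCLike.ofReal_sum, RCLike.ofReal_inj] at this
    simp_rw [norm_div, div_pow, ← sum_div, this, div_self hψ₀]
  · have := hminor i k
    simp only [Pi.smul_apply, smul_eq_mul]
    field_simp
    linear_combination this

lemma le_of_le_sum_mul_of_sum_sq_le {α : Type*} {s : Finset α} {f g : α → ℝ} {A M : ℝ}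
    (hA : A ≤ ∑ z ∈ s, f z * g z) (hf : ∑ z ∈ s, f z ^ 2 ≤ M) (hg : ∑ z ∈ s, g z ^ 2 ≤ A) :
    A ≤ M := by
  have hM : 0 ≤ M := (sum_nonneg fun z _ => sq_nonneg (f z)).trans hf
  rcases le_or_gt A 0 with hA0 | hA0
  · exact hA0.trans hM
  have hsq : A * A ≤ M * A := calc
    A * A ≤ (∑ z ∈ s, f z * g z) ^ 2 := by rw [← sq]; exact pow_le_pow_left₀ hA0.le hA 2
    _ ≤ (∑ z ∈ s, f z ^ 2) * ∑ z ∈ s, g z ^ 2 := sum_mul_sq_le_sq_mul_sq s f g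
    _ ≤ M * A := mul_le_mul hf hg (sum_nonneg fun z _ => sq_nonneg (g z)) hM
  exact le_of_mul_le_mul_right hsq hA0

lemma star_dotProduct_self_eq_sum_norm_sq {ι 𝕜 : Type*} [Fintype ι] [RCLike 𝕜] (v : ι → 𝕜) :
    star v ⬝ᵥ v = ((∑ i, ‖v i‖ ^ 2 : ℝ) : 𝕜) := by
  simp [dotProduct, RCLike.conj_mul]

open ComplexConjugate in
theorem sum_norm_sq_le_maxSum_of_kraus {κ ι 𝕜 : Type*} [Fintype κ] [Fintype ι] [DecidableEq ι]
    [RCLike 𝕜] {K : κ → Matrix ι ι 𝕜} (hK : ∑ k, (K k)ᴴ * K k = 1)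
    (hinc : ∀ k, IsIncoherent (K k)) {ψ₁ ψ₂ : ι → 𝕜} {c : κ → 𝕜} (hc : ∑ k, ‖c k‖ ^ 2 = 1)
    (hKψ : ∀ k, K k *ᵥ ψ₁ = c k • ψ₂) (S : Finset ι) :
    ∑ j ∈ S, ‖ψ₁ j‖ ^ 2 ≤ maxSum (fun i => ‖ψ₂ i‖ ^ 2) S.card := by
  set A := ∑ j ∈ S, ‖ψ₁ j‖ ^ 2
  set w : ι → 𝕜 := fun j => if j ∈ S then ψ₁ j else 0
  choose T hTcard hT using fun k => (hinc k).exists_card_le_support_mulVec S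
  have hx (k : κ) : ∀ i ∉ T k, (K k *ᵥ w) i = 0 := hT k w fun j hj => if_neg hj
  have hA₁ : (A : 𝕜) = ∑ k, ∑ i ∈ T k, conj (c k * ψ₂ i) * (K k *ᵥ w) i := by
    have hψ₁w : star ψ₁ ⬝ᵥ w = (A : 𝕜) := by simp [w, A, dotProduct, RCLike.conj_mul]
    rw [← hψ₁w, ← sum_star_mulVec_dotProduct_mulVec hK ψ₁ w]
    refine sum_congr rfl fun k _ => ?_
    rw [hKψ k, dotProduct, ← sum_subset (subset_univ (T k)) fun i _ hi => by simp [hx k i hi]]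
    simp
  have hA₂ : ∑ k, ∑ i, ‖(K k *ᵥ w) i‖ ^ 2 = A := by
    have := sum_star_mulVec_dotProduct_mulVec hK w w
    simp_rw [star_dotProduct_self_eq_sum_norm_sq, ← RCLike.ofReal_sum, RCLike.ofReal_inj] at this
    rw [this, ← sum_subset (subset_univ S) fun j _ hj => by simp [w, hj]]
    exact sum_congr rfl fun j hj => by simp [w, hj]
  refine le_of_le_sum_mul_of_sum_sq_le (s := univ.sigma T) (f := fun z => ‖c z.1‖ * ‖ψ₂ z.2‖)
    (g := fun z => ‖(K z.1 *ᵥ w) z.2‖) ?_ ?_ ?_ <;> rw [sum_sigma]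
  · calc A = ‖(A : 𝕜)‖ := (RCLike.norm_of_nonneg (sum_nonneg fun j _ => sq_nonneg _)).symm
      _ ≤ _ := by
        rw [hA₁]
        refine (norm_sum_le _ _).trans (sum_le_sum fun k _ => (norm_sum_le _ _).trans_eq ?_)
        simp [mul_assoc]
  · calc ∑ k, ∑ i ∈ T k, (‖c k‖ * ‖ψ₂ i‖) ^ 2
        = ∑ k, ‖c k‖ ^ 2 * ∑ i ∈ T k, ‖ψ₂ i‖ ^ 2 := by simp [mul_pow, mul_sum]
      _ ≤ ∑ k, ‖c k‖ ^ 2 * maxSum (fun i => ‖ψ₂ i‖ ^ 2) S.card := by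
        gcongr with k
        exact sum_le_maxSum_of_card_le (fun i => sq_nonneg _) (hTcard k) S.card_le_univ
      _ = _ := by rw [← sum_mul, hc, one_mul]
  · rw [← hA₂]
    exact sum_le_sum fun k _ => sum_le_sum_of_subset_of_nonneg (subset_univ _)
      fun i _ _ => sq_nonneg _

theorem maxSum_le_maxSum_of_kraus {κ ι 𝕜 : Type*} [Fintype κ] [Fintype ι] [DecidableEq ι]
    [RCLike 𝕜] {K : κ → Matrix ι ι 𝕜} (hK : ∑ k, (K k)ᴴ * K k = 1)
    (hinc : ∀ k, IsIncoherent (K k)) {ψ₁ ψ₂ : ι → 𝕜} (hψ₂ : ψ₂ ≠ 0)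
    (hconv : ∑ k, K k * vecMulVec ψ₁ (star ψ₁) * (K k)ᴴ = vecMulVec ψ₂ (star ψ₂)) (r : ℕ) :
    maxSum (fun i => ‖ψ₁ i‖ ^ 2) r ≤ maxSum (fun i => ‖ψ₂ i‖ ^ 2) r := by
  simp_rw [mul_vecMulVec_star_mul_conjTranspose] at hconv
  obtain ⟨c, hc, hKψ⟩ := exists_smul_of_sum_vecMulVec_eq hψ₂ hconv
  rcases le_or_gt r (Fintype.card ι) with hr | hr
  · exact maxSum_le hr fun S hS => hS ▸ sum_norm_sq_le_maxSum_of_kraus hK hinc hc hKψ S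
  · rw [maxSum_of_card_lt hr, maxSum_of_card_lt hr]

section MonomialMatrix

variable {ι R : Type*} [DecidableEq ι] [Semiring R]

def monomialMatrix (σ : Equiv.Perm ι) (a : ι → R) : Matrix ι ι R :=
  of fun i j => if i = σ j then a j else 0

variable [Fintype ι]

lemma monomialMatrix_mulVec_apply (σ : Equiv.Perm ι) (a v : ι → R) (j : ι) :
    (monomialMatrix σ a *ᵥ v) (σ j) = a j * v j := by
  simp [monomialMatrix, mulVec, dotProduct, σ.injective.eq_iff]

lemma conjTranspose_mul_monomialMatrix [StarRing R] (σ : Equiv.Perm ι) (a : ι → R) :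
    (monomialMatrix σ a)ᴴ * monomialMatrix σ a = diagonal fun j => star (a j) * a j := by
  ext j j'
  by_cases h : j = j'
  · simp [monomialMatrix, mul_apply, h, apply_ite star]
  · simp [monomialMatrix, mul_apply, h, Ne.symm h, apply_ite star]

lemma isIncoherent_monomialMatrix [StarRing R] [NoZeroDivisors R] (σ : Equiv.Perm ι)
    (a : ι → R) : IsIncoherent (monomialMatrix σ a) :=
  isIncoherent_iff.mpr fun j i hi i' hi' => by
    simp only [monomialMatrix, of_apply, ne_eq, ite_eq_right_iff, not_forall, Set.mem_ofPred_eq]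
      at hi hi'
    exact hi.1.trans hi'.1.symm

end MonomialMatrix

lemma exists_sum_norm_sq_eq_one_mul_eq {κ 𝕜 : Type*} [Fintype κ] [RCLike 𝕜] {x : 𝕜}
    {z : κ → 𝕜} (hz : ∑ k, ‖z k‖ ^ 2 = ‖x‖ ^ 2) {e : κ → 𝕜} (he : ∑ k, ‖e k‖ ^ 2 = 1) :
    ∃ a : κ → 𝕜, ∑ k, ‖a k‖ ^ 2 = 1 ∧ ∀ k, a k * x = z k := by
  by_cases hx : x = 0
  · refine ⟨e, he, fun k => ?_⟩
    rw [hx, norm_zero, sq, zero_mul,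
      sum_eq_zero_iff_of_nonneg fun k _ => sq_nonneg _] at hz
    simpa [hx, eq_comm] using hz k (mem_univ k)
  · refine ⟨fun k => z k / x, ?_, fun k => div_mul_cancel₀ _ hx⟩
    simp_rw [norm_div, div_pow, ← sum_div, hz]
    exact div_self (by positivity)

open ComplexConjugate in
theorem exists_incoherent_kraus_of_eq_sum_perm {κ ι 𝕜 : Type*} [Fintype κ] [Fintype ι]
    [DecidableEq ι] [RCLike 𝕜] {ψ₁ ψ₂ : ι → 𝕜} {t : κ → ℝ} (ht : t ∈ stdSimplex ℝ κ)
    (σ : κ → Equiv.Perm ι) (hp : ∀ j, ‖ψ₁ j‖ ^ 2 = ∑ k, t k * ‖ψ₂ (σ k j)‖ ^ 2) :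
    ∃ K : κ → Matrix ι ι 𝕜, ∑ k, (K k)ᴴ * K k = 1 ∧ (∀ k, IsIncoherent (K k)) ∧
      ∑ k, K k * vecMulVec ψ₁ (star ψ₁) * (K k)ᴴ = vecMulVec ψ₂ (star ψ₂) := by
  have hsqrt (k : κ) : √(t k) ^ 2 = t k := Real.sq_sqrt (ht.1 k)
  -- column `j` of the `k`-th operator is `a j k` at row `σ k j`, chosen so that `Kₖ ψ₁ = √tₖ ψ₂`
  choose a ha hψ using fun j => exists_sum_norm_sq_eq_one_mul_eq (x := ψ₁ j)
    (z := fun k => ((√(t k) : ℝ) : 𝕜) * ψ₂ (σ k j)) (by simp [norm_mul, mul_pow, hsqrt, hp])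
    (e := fun k => ((√(t k) : ℝ) : 𝕜)) (by simp [hsqrt, ht.2])
  have hKψ (k : κ) : monomialMatrix (σ k) (a · k) *ᵥ ψ₁ = ((√(t k) : ℝ) : 𝕜) • ψ₂ :=
    funext <| (σ k).surjective.forall.mpr fun j => by
      rw [monomialMatrix_mulVec_apply, hψ]; rfl
  refine ⟨fun k => monomialMatrix (σ k) (a · k), ?_, fun k => isIncoherent_monomialMatrix _ _, ?_⟩
  · have hcol (j : ι) : ∑ k, conj (a j k) * a j k = 1 := by
      simp_rw [RCLike.conj_mul, ← RCLike.ofReal_pow, ← RCLike.ofReal_sum, ha,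
        RCLike.ofReal_one]
    ext j j'
    simp [conjTranspose_mul_monomialMatrix, Matrix.sum_apply, diagonal_apply, one_apply, hcol]
  · simp_rw [mul_vecMulVec_star_mul_conjTranspose, hKψ]
    ext i i'
    simp [Matrix.sum_apply, vecMulVec_apply, smul_smul, Real.mul_self_sqrt (ht.1 _), ← sum_smul,
      ht.2]

theorem pure_state_incoherent_conversion_iff_majorization_general
    (d : ℕ) (ψ₁ ψ₂ : Fin d → ℂ)
    (hψ₁ : ∑ i, ‖ψ₁ i‖ ^ 2 = 1) (hψ₂ : ∑ i, ‖ψ₂ i‖ ^ 2 = 1) :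
    (∃ N : ℕ, 1 ≤ N ∧ ∃ K : Fin N → Matrix (Fin d) (Fin d) ℂ,
      (∑ n, (K n)ᴴ * (K n) = 1) ∧
      (∀ n, ∀ D : Matrix (Fin d) (Fin d) ℂ, D.IsDiag → ((K n) * D * (K n)ᴴ).IsDiag) ∧
      (∑ n, (K n) * (Matrix.vecMulVec ψ₁ (star ψ₁)) * (K n)ᴴ =
        Matrix.vecMulVec ψ₂ (star ψ₂)))
    ↔ Maj (fun i => ‖ψ₁ i‖ ^ 2) (fun i => ‖ψ₂ i‖ ^ 2) := by
  constructor
  · rintro ⟨N, -, K, hK, hinc, hconv⟩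
    have hψ₂0 : ψ₂ ≠ 0 := by rintro rfl; simp at hψ₂
    exact ⟨hψ₁.trans hψ₂.symm, maxSum_le_maxSum_of_kraus hK hinc hψ₂0 hconv⟩
  · intro hmaj
    obtain ⟨t, ht, hp⟩ :=
      exists_mem_stdSimplex_eq_sum_perm (q := fun i => ‖ψ₂ i‖ ^ 2) hmaj.exists_perm_sum_mul_le
    obtain ⟨K, hK, hinc, hconv⟩ := exists_incoherent_kraus_of_eq_sum_perm (ψ₁ := ψ₁) (ψ₂ := ψ₂)
      ht (fun σ => σ) fun j => by simpa using congrFun hp j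
    let e := (Fintype.equivFin (Equiv.Perm (Fin d))).symm
    refine ⟨_, Fintype.card_pos, K ∘ e, ?_, fun n => hinc (e n), ?_⟩
    · simpa only [Function.comp_apply, Equiv.sum_comp e fun σ => (K σ)ᴴ * K σ] using hK
    · simpa only [Function.comp_apply,
        Equiv.sum_comp e fun σ => K σ * vecMulVec ψ₁ (star ψ₁) * (K σ)ᴴ] using hconv

/-- Theorem of Du–Bai–Guo: a pure state `ψ₁` can be converted to `ψ₂` by an
incoherent operation iff the diagonal part of `ψ₁` is majorized by that of `ψ₂`. -/
theorem pure_state_incoherent_conversion_iff_majorization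
    (d : ℕ) (hd : 1 ≤ d) (ψ₁ ψ₂ : Fin d → ℂ)
    (hψ₁ : ∑ i, ‖ψ₁ i‖ ^ 2 = 1) (hψ₂ : ∑ i, ‖ψ₂ i‖ ^ 2 = 1) :
    (∃ N : ℕ, 1 ≤ N ∧ ∃ K : Fin N → Matrix (Fin d) (Fin d) ℂ,
      (∑ n, (K n)ᴴ * (K n) = 1) ∧
      (∀ n, ∀ D : Matrix (Fin d) (Fin d) ℂ, D.IsDiag → ((K n) * D * (K n)ᴴ).IsDiag) ∧
      (∑ n, (K n) * (Matrix.vecMulVec ψ₁ (star ψ₁)) * (K n)ᴴ =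
        Matrix.vecMulVec ψ₂ (star ψ₂)))
    ↔ Maj (fun i => ‖ψ₁ i‖ ^ 2) (fun i => ‖ψ₂ i‖ ^ 2) :=
  pure_state_incoherent_conversion_iff_majorization_general d ψ₁ ψ₂ hψ₁ hψ₂
end

section
/- Let p, q, φ₁, φ₂ be probability vectors on Fin d and let ε > 0 satisfy (1/2) * ∑ i, |φ₁ i − p i| < ε and (1/2) * ∑ i, |φ₂ i − q i| < ε. Then: (a) for every α with 0 < α < 1, if S_α(p) ≥ S_0(φ₁) + (Real.log ε)/(1 − α) and S_0(q) ≤ S_0(φ₁) + (Real.log ε)/(1 − α), then S_α(q) ≤ S_α(p); and (b) for every α > 1, if S_α(q) ≤ S_∞(φ₂) − (Real.log ε)/(α − 1) and S_∞(φ₂) − (Real.log ε)/(α − 1) ≤ S_∞(p), then S_α(q) ≤ S_α(p). -/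
/-!
For a probability vector, Hölder's inequality on the support gives `∑ xᵢ^α ≤ |supp x|^(1-α)`
when `0 < α < 1`, and `xᵢ^α ≤ (max x)^(α-1) xᵢ` gives `∑ xᵢ^α ≤ (max x)^(α-1)` when `α > 1`;
taking logarithms, `S_α ≤ S_0` in the first range and `S_∞ ≤ S_α` in the second. Each part of
the theorem chains one of these bounds with its two hypotheses.
-/

open Finset

/-- a probability vector: nonnegative entries summing to one -/
def IsProbVec {ι : Type*} [Fintype ι] (p : ι → ℝ) : Prop :=
  (∀ i, 0 ≤ p i) ∧ ∑ i, p i = 1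

/-- Rényi entropy `S_α(x) = (1/(1-α)) log (∑ i, (x i)^α)` for `α ∉ {0,1}` -/
noncomputable def Sa {ι : Type*} [Fintype ι] (α : ℝ) (x : ι → ℝ) : ℝ :=
  (1 / (1 - α)) * Real.log (∑ i, (x i) ^ α)

/-- `S_0(x)`: log of the number of nonzero entries of `x` -/
noncomputable def S0 {ι : Type*} [Fintype ι] (x : ι → ℝ) : ℝ :=
  Real.log ((Finset.univ.filter (fun i => x i ≠ 0)).card : ℝ)

/-- `S_∞(x) = - log (max_i x i)` -/
noncomputable def Sinf {ι : Type*} [Fintype ι] (x : ι → ℝ) : ℝ :=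
  -Real.log (sSup (Set.range x))

theorem Finset.sum_rpow_le_rpow_sum_mul_card_rpow {ι : Type*} (s : Finset ι) {f : ι → ℝ}
    (hf : ∀ i ∈ s, 0 ≤ f i) {α : ℝ} (hα₀ : 0 < α) (hα₁ : α < 1) :
    ∑ i ∈ s, f i ^ α ≤ (∑ i ∈ s, f i) ^ α * (#s : ℝ) ^ (1 - α) := by
  -- Hölder for the exponents `1` and `α / (1 - α)`, whose reciprocals add up to `1 / α`,
  -- applied to `f` and the constant `1`.
  have hpqr : Real.HolderTriple 1 (α / (1 - α)) α :=
    ⟨by field_simp; ring, one_pos, div_pos hα₀ (by linarith)⟩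
  have := Real.Lr_rpow_le_Lp_mul_Lq_of_nonneg s hpqr hf (g := fun _ => 1) (fun _ _ => zero_le_one)
  simp only [mul_one, Real.rpow_one, Real.one_rpow, sum_const, nsmul_eq_mul, div_one] at this
  convert this using 3
  field_simp

theorem Finset.sum_rpow_le_rpow_mul_sum {ι : Type*} (s : Finset ι) {f : ι → ℝ} {M α : ℝ}
    (hf₀ : ∀ i ∈ s, 0 ≤ f i) (hfM : ∀ i ∈ s, f i ≤ M) (hα : 1 ≤ α) :
    ∑ i ∈ s, f i ^ α ≤ M ^ (α - 1) * ∑ i ∈ s, f i := by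
  rw [mul_sum]
  refine sum_le_sum fun i hi => ?_
  calc f i ^ α = f i ^ (α - 1) * f i := by
        rw [← Real.rpow_add_one' (hf₀ i hi) (by linarith), sub_add_cancel]
    _ ≤ M ^ (α - 1) * f i :=
        mul_le_mul_of_nonneg_right (Real.rpow_le_rpow (hf₀ i hi) (hfM i hi) (by linarith))
          (hf₀ i hi)

namespace IsProbVec

variable {ι : Type*} [Fintype ι] {x : ι → ℝ}

theorem exists_pos (hx : IsProbVec x) : ∃ i, 0 < x i := by
  by_contra! h
  have : ∑ i, x i = 0 := sum_eq_zero fun i _ => le_antisymm (h i) (hx.1 i)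
  linarith [hx.2]

theorem sum_rpow_pos (hx : IsProbVec x) (α : ℝ) : 0 < ∑ i, x i ^ α := by
  obtain ⟨i, hi⟩ := hx.exists_pos
  exact sum_pos' (fun j _ => Real.rpow_nonneg (hx.1 j) α) ⟨i, mem_univ i, Real.rpow_pos_of_pos hi α⟩

theorem sum_rpow_le_card_support_rpow (hx : IsProbVec x) {α : ℝ} (hα₀ : 0 < α) (hα₁ : α < 1) :
    ∑ i, x i ^ α ≤ (#{i | x i ≠ 0} : ℝ) ^ (1 - α) := by
  have hsupp : ∀ {g : ι → ℝ}, (∀ i, x i = 0 → g i = 0) → ∑ i with x i ≠ 0, g i = ∑ i, g i :=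
    fun hg => sum_filter_of_ne fun i _ hgi => fun hxi => hgi (hg i hxi)
  have := sum_rpow_le_rpow_sum_mul_card_rpow {i | x i ≠ 0} (fun i _ => hx.1 i) hα₀ hα₁
  rwa [hsupp (fun i hi => by rw [hi, Real.zero_rpow hα₀.ne']), hsupp (fun _ => id), hx.2,
    Real.one_rpow, one_mul] at this

theorem sum_rpow_le_sSup_rpow (hx : IsProbVec x) {α : ℝ} (hα : 1 ≤ α) :
    ∑ i, x i ^ α ≤ sSup (Set.range x) ^ (α - 1) := by
  have := sum_rpow_le_rpow_mul_sum univ (fun i _ => hx.1 i)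
    (fun i _ => le_ciSup (Finite.bddAbove_range x) i) hα
  rwa [hx.2, mul_one] at this

theorem Sa_le_S0 (hx : IsProbVec x) {α : ℝ} (hα₀ : 0 < α) (hα₁ : α < 1) : Sa α x ≤ S0 x := by
  obtain ⟨i, hi⟩ := hx.exists_pos
  have hcard : (0 : ℝ) < #{i | x i ≠ 0} := by
    exact_mod_cast card_pos.2 ⟨i, mem_filter.2 ⟨mem_univ i, hi.ne'⟩⟩
  rw [Sa, S0, one_div_mul_eq_div, div_le_iff₀ (by linarith)]
  calc Real.log (∑ i, x i ^ α) ≤ Real.log ((#{i | x i ≠ 0} : ℝ) ^ (1 - α)) :=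
        Real.log_le_log (hx.sum_rpow_pos α) (hx.sum_rpow_le_card_support_rpow hα₀ hα₁)
    _ = _ := by rw [Real.log_rpow hcard, mul_comm]

theorem Sinf_le_Sa (hx : IsProbVec x) {α : ℝ} (hα : 1 < α) : Sinf x ≤ Sa α x := by
  obtain ⟨i, hi⟩ := hx.exists_pos
  have hmax : 0 < sSup (Set.range x) := hi.trans_le (le_ciSup (Finite.bddAbove_range x) i)
  rw [Sa, Sinf, one_div_mul_eq_div, le_div_iff_of_neg (by linarith)]
  calc Real.log (∑ i, x i ^ α) ≤ Real.log (sSup (Set.range x) ^ (α - 1)) :=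
        Real.log_le_log (hx.sum_rpow_pos α) (hx.sum_rpow_le_sSup_rpow hα.le)
    _ = _ := by rw [Real.log_rpow hmax]; ring

end IsProbVec

theorem finitely_many_conditions_suffice_general
    (d : ℕ) (p q φ₁ φ₂ : Fin d → ℝ)
    (hp : IsProbVec p) (hq : IsProbVec q)
    (ε : ℝ) :
    (∀ α : ℝ, 0 < α → α < 1 →
      S0 φ₁ + Real.log ε / (1 - α) ≤ Sa α p →
      S0 q ≤ S0 φ₁ + Real.log ε / (1 - α) →
      Sa α q ≤ Sa α p) ∧
    (∀ α : ℝ, 1 < α →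
      Sa α q ≤ Sinf φ₂ - Real.log ε / (α - 1) →
      Sinf φ₂ - Real.log ε / (α - 1) ≤ Sinf p →
      Sa α q ≤ Sa α p) :=
  ⟨fun _ hα₀ hα₁ hp_ge hq_le => ((hq.Sa_le_S0 hα₀ hα₁).trans hq_le).trans hp_ge,
    fun _ hα hq_le hp_ge => (hq_le.trans hp_ge).trans (hp.Sinf_le_Sa hα)⟩

/-- Checking finitely many entropic conditions (via smoothed vectors `φ₁, φ₂`
in the ε-balls around `p` and `q`) suffices to establish all the Rényi-entropy
inequalities for `α ∈ (0,1) ∪ (1,∞)`. -/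
theorem finitely_many_conditions_suffice
    (d : ℕ) (p q φ₁ φ₂ : Fin d → ℝ)
    (hp : IsProbVec p) (hq : IsProbVec q)
    (hφ₁ : IsProbVec φ₁) (hφ₂ : IsProbVec φ₂)
    (ε : ℝ) (hε : 0 < ε)
    (hball₁ : (1 / 2) * ∑ i, |φ₁ i - p i| < ε)
    (hball₂ : (1 / 2) * ∑ i, |φ₂ i - q i| < ε) :
    (∀ α : ℝ, 0 < α → α < 1 →
      S0 φ₁ + Real.log ε / (1 - α) ≤ Sa α p →
      S0 q ≤ S0 φ₁ + Real.log ε / (1 - α) →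
      Sa α q ≤ Sa α p) ∧
    (∀ α : ℝ, 1 < α →
      Sa α q ≤ Sinf φ₂ - Real.log ε / (α - 1) →
      Sinf φ₂ - Real.log ε / (α - 1) ≤ Sinf p →
      Sa α q ≤ Sa α p) :=
  finitely_many_conditions_suffice_general d p q φ₁ φ₂ hp hq ε
end

section
/- Let p, q be probability vectors on Fin d whose entries are decreasingly ordered (p i ≥ p j and q i ≥ q j whenever i ≤ j), with q i > 0 for all i. Suppose that the optimal conversion probability P(p → q) := min_{0 ≤ l ≤ d−1} C_l(p)/C_l(q) equals C_{d−1}(p)/C_{d−1}(q) = p (d−1) / q (d−1). Then for every m ≥ 1 and every probability vector r on Fin m with r j > 0 for all j, one has min_{0 ≤ l ≤ dm−1} C_l(p ⊗ r)/C_l(q ⊗ r) ≤ p (d−1) / q (d−1); that is, the optimal conversion probability cannot be increased by any catalyst. -/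
open Finset

/-- tensor product of two vectors -/
def tensor {ι κ : Type*} (p : ι → ℝ) (r : κ → ℝ) : ι × κ → ℝ :=
  fun x => p x.1 * r x.2

/-- `C_l(x) = 1 - max_{|S| = l} ∑_{i ∈ S} x i`, the sum of the smallest
`n - l` entries of `x`. -/
noncomputable def Cl {ι : Type*} [Fintype ι] (x : ι → ℝ) (l : ℕ) : ℝ :=
  1 - maxSum x l

/-- optimal conversion probability: `min_{0 ≤ l ≤ n-1} C_l(p)/C_l(q)` -/
noncomputable def Pconv {ι : Type*} [Fintype ι] (n : ℕ) (p q : ι → ℝ) : ℝ :=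
  sInf {x : ℝ | ∃ l < n, x = Cl p l / Cl q l}

/-!
The smallest entry of `p ⊗ r` is `p (last) * min r`, and likewise for `q ⊗ r`, so the ratio at the
last level `l = dm - 1` is `p (last) * min r / (q (last) * min r) = p (last) / q (last)`; the
minimum over all levels can only be smaller.
-/

section

variable {ι κ : Type*}

lemma tensor_min_le {p : ι → ℝ} {r : κ → ℝ} {i₀ : ι} {j₀ : κ} (hp : ∀ i, 0 ≤ p i)
    (hr : 0 ≤ r j₀) (hi₀ : ∀ i, p i₀ ≤ p i) (hj₀ : ∀ j, r j₀ ≤ r j) (z : ι × κ) :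
    tensor p r (i₀, j₀) ≤ tensor p r z :=
  mul_le_mul (hi₀ z.1) (hj₀ z.2) hr (hp z.1)

variable [Fintype ι] [Fintype κ]

lemma maxSum_card_sub_one (x : ι → ℝ) {i₀ : ι} (hi₀ : ∀ i, x i₀ ≤ x i) :
    maxSum x (Fintype.card ι - 1) = ∑ i, x i - x i₀ := by
  classical
  refine IsGreatest.csSup_eq ⟨⟨{i₀}ᶜ, by simp [card_compl], ?_⟩, ?_⟩
  · linarith [sum_compl_add_sum {i₀} x, sum_singleton x i₀]
  · rintro _ ⟨S, hS, rfl⟩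
    have hScard : Sᶜ.card = 1 := by
      have : 0 < Fintype.card ι := Fintype.card_pos_iff.mpr ⟨i₀⟩
      rw [card_compl, hS]
      omega
    obtain ⟨j, hj⟩ := card_eq_one.mp hScard
    have hsplit := sum_compl_add_sum S x
    rw [hj, sum_singleton] at hsplit
    linarith [hi₀ j]

lemma Cl_card_sub_one (x : ι → ℝ) (hx : ∑ i, x i = 1) {i₀ : ι} (hi₀ : ∀ i, x i₀ ≤ x i) :
    Cl x (Fintype.card ι - 1) = x i₀ := by
  rw [Cl, maxSum_card_sub_one x hi₀, hx]
  ring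

lemma Pconv_le_div (n : ℕ) (p q : ι → ℝ) {l : ℕ} (hl : l < n) :
    Pconv n p q ≤ Cl p l / Cl q l := by
  have hsub : {x : ℝ | ∃ l < n, x = Cl p l / Cl q l} ⊆
      (fun l => Cl p l / Cl q l) '' Set.Iio n := by
    rintro _ ⟨l, hl, rfl⟩
    exact ⟨l, hl, rfl⟩
  exact csInf_le (((Set.finite_Iio n).image _).subset hsub).bddBelow ⟨l, hl, rfl⟩

lemma sum_tensor (p : ι → ℝ) (r : κ → ℝ) :
    ∑ z, tensor p r z = (∑ i, p i) * ∑ j, r j := by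
  rw [Fintype.sum_mul_sum, Fintype.sum_prod_type]
  rfl

end

theorem no_catalyst_improvement_when_last_ratio_general
    (d : ℕ) (p q : Fin (d + 1) → ℝ)
    (hp : IsProbVec p) (hq : IsProbVec q)
    (hpdec : ∀ i j : Fin (d + 1), i ≤ j → p j ≤ p i)
    (hqdec : ∀ i j : Fin (d + 1), i ≤ j → q j ≤ q i) :
    ∀ m : ℕ, 1 ≤ m → ∀ r : Fin m → ℝ, IsProbVec r → (∀ j, 0 < r j) →
      Pconv ((d + 1) * m) (tensor p r) (tensor q r) ≤ p (Fin.last d) / q (Fin.last d) := by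
  intro m hm r hr hrpos
  have : Nonempty (Fin m) := ⟨⟨0, hm⟩⟩
  obtain ⟨j₀, hj₀⟩ := Finite.exists_min r
  have hlast : ∀ x : Fin (d + 1) → ℝ, IsProbVec x → (∀ i j : Fin (d + 1), i ≤ j → x j ≤ x i) →
      Cl (tensor x r) ((d + 1) * m - 1) = x (Fin.last d) * r j₀ := by
    intro x hx hxdec
    have hsum : ∑ z, tensor x r z = 1 := by rw [sum_tensor, hx.2, hr.2, one_mul]
    simpa [tensor] using Cl_card_sub_one _ hsum
      (tensor_min_le hx.1 (hr.1 j₀) (fun i => hxdec _ _ (Fin.le_last i)) hj₀)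
  calc Pconv ((d + 1) * m) (tensor p r) (tensor q r)
      ≤ Cl (tensor p r) ((d + 1) * m - 1) / Cl (tensor q r) ((d + 1) * m - 1) :=
        Pconv_le_div _ _ _ (Nat.sub_one_lt (Nat.mul_pos d.succ_pos hm).ne')
    _ = p (Fin.last d) / q (Fin.last d) := by
        rw [hlast p hp hpdec, hlast q hq hqdec, mul_div_mul_right _ _ (hrpos j₀).ne']

/-- If the optimal conversion probability is attained at the last level,
equalling the ratio of the smallest entries, then no catalyst can increase it. -/
theorem no_catalyst_improvement_when_last_ratio
    (d : ℕ) (p q : Fin (d + 1) → ℝ)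
    (hp : IsProbVec p) (hq : IsProbVec q)
    (hpdec : ∀ i j : Fin (d + 1), i ≤ j → p j ≤ p i)
    (hqdec : ∀ i j : Fin (d + 1), i ≤ j → q j ≤ q i)
    (hqpos : ∀ i, 0 < q i)
    (hmin : Pconv (d + 1) p q = p (Fin.last d) / q (Fin.last d)) :
    ∀ m : ℕ, 1 ≤ m → ∀ r : Fin m → ℝ, IsProbVec r → (∀ j, 0 < r j) →
      Pconv ((d + 1) * m) (tensor p r) (tensor q r) ≤ p (Fin.last d) / q (Fin.last d) :=
  no_catalyst_improvement_when_last_ratio_general d p q hp hq hpdec hqdec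
end

section
/- Let a : ℂ be 1/(2 * Real.sqrt 2), and define 3×3 complex matrices K₁, …, K₈ as follows: K₁ = K₂ has first row (a, a, a) and all other entries 0; K₃ = K₄ has first row (−a, a, a) and all other entries 0; K₅ = K₆ = K₇ = K₈ has first row (a, 0, 0), second row (0, a, −a), and third row 0. Let ψ : Fin 3 → ℂ be the constant function ψ i = 1/Real.sqrt 3 and let P = Matrix.vecMulVec ψ (star ψ) (so every entry of P equals 1/3). Then: (i) ∑_{n=1}^{8} Kₙᴴ * Kₙ = 1; (ii) for every n ∈ {1,…,8} and every diagonal matrix D : Matrix (Fin 3) (Fin 3) ℂ, the matrix Kₙ * D * Kₙᴴ is diagonal; (iii) ∑_{n=1}^{8} Kₙ * P * Kₙᴴ = Matrix.stdBasisMatrix 0 0 1 (the matrix with (0,0) entry 1 and all other entries 0). -/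
/-!
Every `Kop n` has at most one nonzero entry in each column, and such a `K` maps diagonal matrices
to diagonal matrices under `D ↦ K D Kᴴ`. The second and third rows of every `Kop n` sum to zero,
so `Kop n` sends the constant vector `ψMC` to a multiple of `|0⟩` and `Kop n ψψᴴ (Kop n)ᴴ` is a
multiple of `|0⟩⟨0|`. The weights of these multiples add up to `1` because the family is trace
preserving and `tr (ψψᴴ) = 1`.
-/

open Finset Matrix

/-- the common nonzero entry `1/(2√2)` -/
noncomputable def aK : ℂ := 1 / (2 * (Real.sqrt 2 : ℂ))

/-- the eight Kraus operators of the counterexample incoherent channel -/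
noncomputable def Kop : Fin 8 → Matrix (Fin 3) (Fin 3) ℂ :=
  ![!![aK, aK, aK; 0, 0, 0; 0, 0, 0],
    !![aK, aK, aK; 0, 0, 0; 0, 0, 0],
    !![-aK, aK, aK; 0, 0, 0; 0, 0, 0],
    !![-aK, aK, aK; 0, 0, 0; 0, 0, 0],
    !![aK, 0, 0; 0, aK, -aK; 0, 0, 0],
    !![aK, 0, 0; 0, aK, -aK; 0, 0, 0],
    !![aK, 0, 0; 0, aK, -aK; 0, 0, 0],
    !![aK, 0, 0; 0, aK, -aK; 0, 0, 0]]

/-- the maximally coherent qutrit state -/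
noncomputable def ψMC : Fin 3 → ℂ := fun _ => 1 / (Real.sqrt 3 : ℂ)

namespace Matrix

variable {ι m n R : Type*}

theorem IsDiag.mul_mul_conjTranspose [Fintype n] [DecidableEq n] [Semiring R] [StarRing R]
    {D : Matrix n n R} (hD : D.IsDiag) {K : Matrix m n R} (f : n → m)
    (hK : ∀ i j, i ≠ f j → K i j = 0) :
    (K * D * Kᴴ).IsDiag := by
  rw [← (isDiag_iff_diagonal_diag D).mp hD]
  intro i i' hii'
  rw [mul_apply]
  simp only [mul_diagonal, conjTranspose_apply]
  refine Finset.sum_eq_zero fun j _ => ?_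
  by_cases hi : i = f j
  · rw [hK i' j (hi ▸ Ne.symm hii'), star_zero, mul_zero]
  · rw [hK i j hi, zero_mul, zero_mul]

theorem mul_vecMulVec_star_mul_conjTranspose [Fintype m] [Semiring R] [StarRing R]
    (K : Matrix n m R) (ψ : m → R) :
    K * vecMulVec ψ (star ψ) * Kᴴ = vecMulVec (K *ᵥ ψ) (star (K *ᵥ ψ)) := by
  rw [mul_vecMulVec, vecMulVec_mul, star_mulVec]

theorem vecMulVec_eq_single [DecidableEq n] [MulZeroClass R] {v w : n → R} {i : n}
    (hv : ∀ j ≠ i, v j = 0) (hw : ∀ j ≠ i, w j = 0) :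
    vecMulVec v w = single i i (v i * w i) := by
  ext j k
  by_cases hj : j = i
  · by_cases hk : k = i
    · simp [hj, hk, vecMulVec_apply]
    · simp [hw k hk, vecMulVec_apply, Ne.symm hk]
  · simp [hv j hj, vecMulVec_apply, Ne.symm hj]

theorem mul_vecMulVec_star_mul_conjTranspose_eq_single [Fintype m] [DecidableEq n] [Semiring R]
    [StarRing R] {K : Matrix n m R} {ψ : m → R} {i : n} (hKψ : ∀ j ≠ i, (K *ᵥ ψ) j = 0) :
    K * vecMulVec ψ (star ψ) * Kᴴ = single i i ((K *ᵥ ψ) i * star ((K *ᵥ ψ) i)) := by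
  rw [mul_vecMulVec_star_mul_conjTranspose]
  exact vecMulVec_eq_single hKψ fun j hj => by rw [Pi.star_apply, hKψ j hj, star_zero]

theorem sum_mul_mul_conjTranspose_eq_single [Fintype n] [DecidableEq n] [Fintype ι] [CommSemiring R]
    [StarRing R] (K : ι → Matrix n n R) (hK : ∑ a, (K a)ᴴ * K a = 1) {ρ : Matrix n n R}
    (hρ : ρ.trace = 1) (i : n) (hKρ : ∀ a, ∃ c, K a * ρ * (K a)ᴴ = single i i c) :
    ∑ a, K a * ρ * (K a)ᴴ = single i i 1 := by
  choose c hc using hKρ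
  have hsum : ∑ a, c a = 1 := calc
    ∑ a, c a = (∑ a, K a * ρ * (K a)ᴴ).trace := by simp [hc, trace_sum]
    _ = ((∑ a, (K a)ᴴ * K a) * ρ).trace := by
      simp only [trace_sum, Finset.sum_mul, trace_mul_cycle (K _)]
    _ = 1 := by rw [hK, one_mul, hρ]
  simp_rw [hc, ← hsum]
  exact (map_sum (singleAddMonoidHom i i) c univ).symm

end Matrix

lemma conj_aK : starRingEnd ℂ aK = aK := by
  simp [aK, map_ofNat]

lemma aK_mul_self : aK * aK = 1 / 8 := by
  have h : (Real.sqrt 2 : ℂ) * Real.sqrt 2 = 2 := by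
    rw [← Complex.ofReal_mul, Real.mul_self_sqrt zero_le_two, Complex.ofReal_ofNat]
  rw [aK, div_mul_div_comm, mul_mul_mul_comm, h]
  norm_num

lemma sum_conjTranspose_Kop_mul_self : ∑ n, (Kop n)ᴴ * Kop n = 1 := by
  ext i j
  fin_cases i <;> fin_cases j <;>
    norm_num [Kop, Fin.sum_univ_succ, mul_apply, conj_aK, one_apply, aK_mul_self]

lemma exists_Kop_apply_eq_zero_of_ne (n : Fin 8) :
    ∃ f : Fin 3 → Fin 3, ∀ i j, i ≠ f j → Kop n i j = 0 := by
  refine ⟨if n < 4 then 0 else ![0, 1, 1], fun i j hij => ?_⟩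
  fin_cases n <;> fin_cases i <;> fin_cases j <;> simp [Kop] at hij ⊢

lemma Kop_mulVec_ψMC_eq_zero_of_ne (n : Fin 8) : ∀ j ≠ 0, (Kop n *ᵥ ψMC) j = 0 := by
  intro j hj
  fin_cases n <;> fin_cases j <;> simp [Kop, mulVec, dotProduct, Fin.sum_univ_three, ψMC] at hj ⊢

lemma trace_vecMulVec_ψMC : (vecMulVec ψMC (star ψMC)).trace = 1 := by
  have h : (Real.sqrt 3 : ℂ) * Real.sqrt 3 = 3 := by
    rw [← Complex.ofReal_mul, Real.mul_self_sqrt zero_le_three, Complex.ofReal_ofNat]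
  simp [trace_vecMulVec, dotProduct, ψMC, ← mul_inv, h]

/-- The explicit Kraus family `Kop` is a valid incoherent channel mapping the
maximally coherent qutrit state to `|0⟩`, whose Kraus operators are not all of
a single permutation-triangular pattern. -/
theorem counterexample_incoherent_channel :
    (∑ n, (Kop n)ᴴ * (Kop n) = 1) ∧
    (∀ n, ∀ D : Matrix (Fin 3) (Fin 3) ℂ, D.IsDiag → ((Kop n) * D * (Kop n)ᴴ).IsDiag) ∧
    (∑ n, (Kop n) * (Matrix.vecMulVec ψMC (star ψMC)) * (Kop n)ᴴ =
      Matrix.single (0 : Fin 3) (0 : Fin 3) (1 : ℂ)) := by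
  refine ⟨sum_conjTranspose_Kop_mul_self, fun n D hD => ?_, ?_⟩
  · obtain ⟨f, hf⟩ := exists_Kop_apply_eq_zero_of_ne n
    exact hD.mul_mul_conjTranspose f hf
  · refine sum_mul_mul_conjTranspose_eq_single Kop sum_conjTranspose_Kop_mul_self
      trace_vecMulVec_ψMC 0 fun n =>
        ⟨_, mul_vecMulVec_star_mul_conjTranspose_eq_single (Kop_mulVec_ψMC_eq_zero_of_ne n)⟩
end

section
/- Let p = (2/5, 2/5, 1/5) and q = (1/2, 1/4, 1/4) be probability vectors on Fin 3, and let φ = (3/5, 2/5) be a probability vector on Fin 2. Then: min_{0 ≤ l ≤ 2} C_l(p)/C_l(q) = 4/5; min_{0 ≤ l ≤ 2} C_l(q)/C_l(p) = 5/6; min_{0 ≤ l ≤ 5} C_l(p ⊗ φ)/C_l(q ⊗ φ) = 4/5; and min_{0 ≤ l ≤ 5} C_l(q ⊗ φ)/C_l(p ⊗ φ) = 35/38. -/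
/-! All entries are rational, so everything reduces to arithmetic on numerators: with the
denominator `D` cleared, `D · C_l` is `D` minus the largest sum of `l` integer numerators, a
finite maximum evaluated by `decide`, and the claimed minimum of the ratios is checked against
every `l` by cross-multiplication. Here `5 C_l(p) = 5, 3, 1`, `4 C_l(q) = 4, 2, 1`,
`25 C_l(p ⊗ φ) = 25, 19, 13, 9, 5, 2` and `20 C_l(q ⊗ φ) = 20, 14, 10, 7, 4, 2`, so the four
minima are attained at `l = 2, 1, 5, 1`. -/

open Finset

section

variable {ι : Type*} [Fintype ι]

def maxSumNat (a : ι → ℕ) (k : ℕ) : ℕ :=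
  (univ.powersetCard k).sup fun S => ∑ i ∈ S, a i

theorem maxSum_natCast_div (a : ι → ℕ) {D : ℝ} (hD : 0 ≤ D) (k : ℕ) :
    maxSum (fun i => (a i : ℝ) / D) k = maxSumNat a k / D := by
  have sum_eq (S : Finset ι) : ∑ i ∈ S, (a i : ℝ) / D = ((∑ i ∈ S, a i : ℕ) : ℝ) / D := by
    rw [Nat.cast_sum, sum_div]
  rcases le_or_gt k (Fintype.card ι) with hk | hk
  · obtain ⟨S₀, hS₀, hsup⟩ := exists_mem_eq_sup (univ.powersetCard k)
      (powersetCard_nonempty.2 (by simpa using hk)) fun S => ∑ i ∈ S, a i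
    refine IsGreatest.csSup_eq ⟨⟨S₀, (mem_powersetCard.1 hS₀).2, ?_⟩, ?_⟩
    · rw [sum_eq, maxSumNat, hsup]
    · rintro _ ⟨S, hS, rfl⟩
      rw [sum_eq]
      gcongr
      exact le_sup (f := fun S => ∑ i ∈ S, a i) (mem_powersetCard.2 ⟨subset_univ S, hS⟩)
  · have hempty : {x : ℝ | ∃ S : Finset ι, S.card = k ∧ x = ∑ i ∈ S, (a i : ℝ) / D} = ∅ :=
      Set.eq_empty_of_forall_notMem fun _ ⟨S, hS, _⟩ =>
        (hS ▸ card_le_univ S).not_gt hk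
    rw [maxSum, hempty, Real.sSup_empty, maxSumNat,
      powersetCard_eq_empty.2 (by simpa using hk), sup_empty, Nat.bot_eq_zero, Nat.cast_zero,
      zero_div]

theorem Cl_natCast_div (a : ι → ℕ) {D : ℕ} (hD : 0 < D) (l : ℕ) :
    Cl (fun i => (a i : ℝ) / D) l = ((D : ℝ) - maxSumNat a l) / D := by
  rw [Cl, maxSum_natCast_div a D.cast_nonneg, sub_div, div_self (by positivity)]

theorem Pconv_eq {n : ℕ} {p q : ι → ℝ} {v : ℝ} (hmem : ∃ l < n, Cl p l / Cl q l = v)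
    (hle : ∀ l < n, v ≤ Cl p l / Cl q l) : Pconv n p q = v := by
  obtain ⟨l₀, hl₀, hv⟩ := hmem
  exact IsLeast.csInf_eq ⟨⟨l₀, hl₀, hv.symm⟩, by rintro _ ⟨l, hl, rfl⟩; exact hle l hl⟩

theorem Pconv_natCast_div_eq {n : ℕ} (a b : ι → ℕ) {D E r s : ℕ} (hD : 0 < D) (hs : 0 < s)
    (hb : ∀ l < n, maxSumNat b l < E)
    (hmem : ∃ l < n, ((D : ℤ) - maxSumNat a l) * E * s = r * ((E - maxSumNat b l) * D))
    (hle : ∀ l < n, (r : ℤ) * ((E - maxSumNat b l) * D) ≤ (D - maxSumNat a l) * E * s) :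
    Pconv n (fun i => (a i : ℝ) / D) (fun i => (b i : ℝ) / E) = r / s := by
  have hE : 0 < E := by
    obtain ⟨l, hl, -⟩ := hmem
    exact (Nat.zero_le _).trans_lt (hb l hl)
  have ratio_eq (l : ℕ) : Cl (fun i => (a i : ℝ) / D) l / Cl (fun i => (b i : ℝ) / E) l =
      ((D - maxSumNat a l) * E : ℝ) / ((E - maxSumNat b l) * D) := by
    rw [Cl_natCast_div a hD, Cl_natCast_div b hE]
    field_simp
  have denom_pos {l : ℕ} (hl : l < n) : (0 : ℝ) < (E - maxSumNat b l) * D :=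
    mul_pos (sub_pos.2 (by exact_mod_cast hb l hl)) (by exact_mod_cast hD)
  have hs' : (0 : ℝ) < s := by exact_mod_cast hs
  refine Pconv_eq ?_ fun l hl => ?_
  · obtain ⟨l, hl, h⟩ := hmem
    refine ⟨l, hl, ?_⟩
    rw [ratio_eq, div_eq_div_iff (denom_pos hl).ne' hs'.ne']
    exact_mod_cast h
  · rw [ratio_eq, div_le_div_iff₀ hs' (denom_pos hl)]
    exact_mod_cast hle l hl

end

theorem tensor_natCast_div {ι κ : Type*} (a : ι → ℕ) (b : κ → ℕ) (D E : ℕ) :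
    tensor (fun i => (a i : ℝ) / D) (fun j => (b j : ℝ) / E) =
      fun x => ((a x.1 * b x.2 : ℕ) : ℝ) / (D * E : ℕ) := by
  ext x
  simp only [tensor]
  push_cast
  ring

/-- A catalyst increasing the optimal conversion probability in one direction
(from `5/6` to `35/38`) but not the other (it stays `4/5`). -/
theorem stochastic_catalysis_example :
    Pconv 3 (![2/5, 2/5, 1/5] : Fin 3 → ℝ) (![1/2, 1/4, 1/4] : Fin 3 → ℝ) = 4/5 ∧
    Pconv 3 (![1/2, 1/4, 1/4] : Fin 3 → ℝ) (![2/5, 2/5, 1/5] : Fin 3 → ℝ) = 5/6 ∧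
    Pconv 6 (tensor (![2/5, 2/5, 1/5] : Fin 3 → ℝ) (![3/5, 2/5] : Fin 2 → ℝ))
            (tensor (![1/2, 1/4, 1/4] : Fin 3 → ℝ) (![3/5, 2/5] : Fin 2 → ℝ)) = 4/5 ∧
    Pconv 6 (tensor (![1/2, 1/4, 1/4] : Fin 3 → ℝ) (![3/5, 2/5] : Fin 2 → ℝ))
            (tensor (![2/5, 2/5, 1/5] : Fin 3 → ℝ) (![3/5, 2/5] : Fin 2 → ℝ)) = 35/38 := by
  have hp : (![2/5, 2/5, 1/5] : Fin 3 → ℝ) =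
      fun i => ((![2, 2, 1] : Fin 3 → ℕ) i : ℝ) / (5 : ℕ) := by
    ext i; fin_cases i <;> norm_num
  have hq : (![1/2, 1/4, 1/4] : Fin 3 → ℝ) =
      fun i => ((![2, 1, 1] : Fin 3 → ℕ) i : ℝ) / (4 : ℕ) := by
    ext i; fin_cases i <;> norm_num
  have hφ : (![3/5, 2/5] : Fin 2 → ℝ) =
      fun i => ((![3, 2] : Fin 2 → ℕ) i : ℝ) / (5 : ℕ) := by
    ext i; fin_cases i <;> norm_num
  rw [hp, hq, hφ, tensor_natCast_div, tensor_natCast_div]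
  refine ⟨?_, ?_, ?_, ?_⟩
  · exact (Pconv_natCast_div_eq (r := 4) (s := 5) _ _ (by norm_num) (by norm_num)
      (by decide) (by decide) (by decide)).trans (by norm_num)
  · exact (Pconv_natCast_div_eq (r := 5) (s := 6) _ _ (by norm_num) (by norm_num)
      (by decide) (by decide) (by decide)).trans (by norm_num)
  · exact (Pconv_natCast_div_eq (r := 4) (s := 5) _ _ (by norm_num) (by norm_num)
      (by decide) (by decide) (by decide)).trans (by norm_num)
  · exact (Pconv_natCast_div_eq (r := 35) (s := 38) _ _ (by norm_num) (by norm_num)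
      (by decide) (by decide) (by decide)).trans (by norm_num)
end

section
/- Let p, q be probability vectors on Fin d with p ≺ q, and suppose q is not a rearrangement of p (there is no permutation σ of Fin d with q = p ∘ σ). Then: (a) for every α > 0 with α ≠ 1, (1/(1−α)) * Real.log (∑ i, (p i)^α) > (1/(1−α)) * Real.log (∑ i, (q i)^α); (b) H(p) > H(q); and (c) if moreover p i > 0 and q i > 0 for all i, then for every α < 0, −(1/(1−α)) * Real.log (∑ i, (p i)^α) > −(1/(1−α)) * Real.log (∑ i, (q i)^α), and ∑ i, Real.log (p i) > ∑ i, Real.log (q i). -/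
open Finset

/-- Shannon entropy (with `0 * log 0 = 0` automatic since `Real.log 0 = 0`) -/
noncomputable def shannon {ι : Type*} [Fintype ι] (p : ι → ℝ) : ℝ :=
  -∑ i, p i * Real.log (p i)

/-!
Sort `p` and `q` decreasingly into `x` and `y`. Majorization says that the partial sums of `x`
are dominated by those of `y`, with equal totals. For `f` strictly convex and differentiable on
`(0, ∞)` the tangent lines give `f (y i) ≥ f (x i) + f' (x i) * (y i - x i)`, strictly for some `i`
because `x ≠ y`, and Abel summation with the decreasing slopes `f' (x i)` shows that
`∑ f' (x i) * (y i - x i) ≥ 0` (Karamata). Where `x i = 0` and `f'` may blow up, the domination of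
partial sums forces `y i = 0`, so these terms drop out. The theorem follows with
`f = x ^ α` (`α > 1` or `α < 0`), `-x ^ α` (`0 < α < 1`), `x * log x` and `-log x`.
-/

theorem sum_mul_nonneg_of_antitoneOn {n : ℕ} {c g : ℕ → ℝ} (hc : AntitoneOn c (Set.Iio n))
    (hg : ∀ k < n, 0 ≤ ∑ i ∈ range k, g i) (htot : ∑ i ∈ range n, g i = 0) :
    0 ≤ ∑ i ∈ range n, c i * g i := by
  have hparts := sum_range_by_parts c g n
  simp only [smul_eq_mul] at hparts
  rw [hparts, htot, mul_zero, zero_sub, neg_nonneg]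
  refine sum_nonpos fun i hi => mul_nonpos_of_nonpos_of_nonneg ?_ (hg _ (by grind))
  rw [sub_nonpos]
  exact hc (by simp; grind) (by simp; grind) (by omega)

theorem Antitone.sum_le_sum_range_card {h : ℕ → ℝ} (hh : Antitone h) (T : Finset ℕ) :
    ∑ i ∈ T, h i ≤ ∑ i ∈ range #T, h i := by
  set r := range #T
  calc ∑ i ∈ T, h i ≤ ∑ i ∈ T ∩ r, h i + #(T \ r) • h #T := by
        rw [← sum_inter_add_sum_sdiff T r]
        gcongr
        exact sum_le_card_nsmul _ _ _ fun i hi => hh (by simp [r] at hi; omega)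
    _ = ∑ i ∈ r ∩ T, h i + #(r \ T) • h #T := by rw [inter_comm, card_sdiff_comm (by simp [r])]
    _ ≤ ∑ i ∈ r, h i := by
        rw [← sum_inter_add_sum_sdiff r T]
        gcongr
        exact card_nsmul_le_sum _ _ _ fun i hi => hh (by simp [r] at hi; omega)

theorem StrictConvexOn.add_deriv_mul_sub_lt {s : Set ℝ} {f : ℝ → ℝ} (hf : StrictConvexOn ℝ s f)
    {a b : ℝ} (ha : a ∈ s) (hb : b ∈ s) (hab : a ≠ b) (hfa : DifferentiableAt ℝ f a) :
    f a + deriv f a * (b - a) < f b := by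
  rcases hab.lt_or_gt with hab | hab
  · have hslope := hf.deriv_lt_slope ha hb hab hfa
    rw [slope_def_field, lt_div_iff₀ (sub_pos.2 hab)] at hslope
    linarith
  · have hslope := hf.slope_lt_deriv hb ha hab hfa
    rw [slope_def_field, div_lt_iff₀ (sub_pos.2 hab)] at hslope
    linarith

theorem strictConvexOn_rpow_of_neg {p : ℝ} (hp : p < 0) :
    StrictConvexOn ℝ (Set.Ioi 0) fun x : ℝ ↦ x ^ p := by
  refine strictConvexOn_of_deriv2_pos' (convex_Ioi 0)
    (fun x hx => (Real.continuousAt_rpow_const x p (Or.inl hx.ne')).continuousWithinAt)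
    fun x hx => ?_
  rw [Real.iter_deriv_rpow_const]
  simpa [descPochhammer_succ_eval] using
    mul_pos (show 0 < p * (p - 1) by nlinarith) (Real.rpow_pos_of_pos hx (p - 2))

section Karamata

variable {s : Set ℝ} {f : ℝ → ℝ} {x y : ℕ → ℝ}

theorem sum_lt_sum_of_partialSums_of_pos (hf : StrictConvexOn ℝ s f)
    (hfd : ∀ a ∈ s, 0 < a → DifferentiableAt ℝ f a) {n : ℕ} (hx : Antitone x)
    (hxpos : ∀ i < n, 0 < x i) (hxs : ∀ i < n, x i ∈ s) (hys : ∀ i < n, y i ∈ s)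
    (hpart : ∀ k < n, ∑ i ∈ range k, x i ≤ ∑ i ∈ range k, y i)
    (htot : ∑ i ∈ range n, x i = ∑ i ∈ range n, y i) (hne : ∃ i < n, x i ≠ y i) :
    ∑ i ∈ range n, f (x i) < ∑ i ∈ range n, f (y i) := by
  have hmono : MonotoneOn (deriv f) (s ∩ Set.Ioi 0) :=
    ((hf.subset Set.inter_subset_left (hf.1.inter (convex_Ioi 0))).strictMonoOn_deriv
      fun a ha => hfd a ha.1 ha.2).monotoneOn
  have habel : 0 ≤ ∑ i ∈ range n, deriv f (x i) * (y i - x i) := by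
    refine sum_mul_nonneg_of_antitoneOn (fun i hi j hj hij => ?_) (fun k hk => ?_) ?_
    · exact hmono ⟨hxs j hj, hxpos j hj⟩ ⟨hxs i hi, hxpos i hi⟩ (hx hij)
    · rw [sum_sub_distrib, sub_nonneg]
      exact hpart k hk
    · rw [sum_sub_distrib, htot, sub_self]
  have htangent (i : ℕ) (hi : i < n) (hxy : x i ≠ y i) :=
    hf.add_deriv_mul_sub_lt (hxs i hi) (hys i hi) hxy (hfd _ (hxs i hi) (hxpos i hi))
  obtain ⟨j, hj, hxyj⟩ := hne
  have hsum : ∑ i ∈ range n, (f (x i) + deriv f (x i) * (y i - x i)) <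
      ∑ i ∈ range n, f (y i) := by
    refine sum_lt_sum (fun i hi => ?_) ⟨j, mem_range.2 hj, htangent j hj hxyj⟩
    rcases eq_or_ne (x i) (y i) with hxy | hxy
    · simp [hxy]
    · exact (htangent i (mem_range.1 hi) hxy).le
  rw [sum_add_distrib] at hsum
  linarith

theorem sum_lt_sum_of_partialSums (hs : s ⊆ Set.Ici 0) (hf : StrictConvexOn ℝ s f)
    (hfd : ∀ a ∈ s, 0 < a → DifferentiableAt ℝ f a) {n : ℕ} (hx : Antitone x)
    (hxs : ∀ i < n, x i ∈ s) (hys : ∀ i < n, y i ∈ s)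
    (hpart : ∀ k < n, ∑ i ∈ range k, x i ≤ ∑ i ∈ range k, y i)
    (htot : ∑ i ∈ range n, x i = ∑ i ∈ range n, y i) (hne : ∃ i < n, x i ≠ y i) :
    ∑ i ∈ range n, f (x i) < ∑ i ∈ range n, f (y i) := by
  induction n with
  | zero => simp at hne
  | succ n ih =>
    rcases (Set.mem_Ici.1 (hs (hxs n n.lt_succ_self))).eq_or_lt with hxn | hxn
    · have hyn : y n = 0 := by
        have hpart_n := hpart n n.lt_succ_self
        have hyn_nonneg : 0 ≤ y n := hs (hys n n.lt_succ_self)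
        rw [sum_range_succ, sum_range_succ, ← hxn] at htot
        linarith
      rw [sum_range_succ, sum_range_succ, ← hxn, hyn]
      refine add_lt_add_left (ih (fun i hi => hxs i (by omega)) (fun i hi => hys i (by omega))
        (fun k hk => hpart k (by omega)) ?_ ?_) _
      · simpa [sum_range_succ, ← hxn, hyn] using htot
      · obtain ⟨i, hi, hxy⟩ := hne
        refine ⟨i, lt_of_le_of_ne (Nat.lt_succ_iff.1 hi) ?_, hxy⟩
        rintro rfl
        exact hxy (by rw [← hxn, hyn])
    · exact sum_lt_sum_of_partialSums_of_pos hf hfd hx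
        (fun i hi => hxn.trans_le (hx (by omega))) hxs hys hpart htot hne

end Karamata

section DecreasingRearrangement

variable {d : ℕ}

noncomputable def antitoneSort (p : Fin d → ℝ) : Equiv.Perm (Fin d) :=
  Tuple.sort fun i => -p i

theorem antitone_comp_antitoneSort (p : Fin d → ℝ) : Antitone (p ∘ antitoneSort p) :=
  fun _ _ hij => neg_le_neg_iff.1 (Tuple.monotone_sort (fun i => -p i) hij)

noncomputable def sortedDesc (p : Fin d → ℝ) (k : ℕ) : ℝ :=
  if h : k < d then p (antitoneSort p ⟨k, h⟩) else 0

noncomputable def sortedRank (p : Fin d → ℝ) : Fin d ↪ ℕ :=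
  (antitoneSort p).symm.toEmbedding.trans Fin.valEmbedding

theorem sortedDesc_sortedRank (p : Fin d → ℝ) (i : Fin d) :
    sortedDesc p (sortedRank p i) = p i := by
  simp [sortedDesc, sortedRank]

theorem map_univ_sortedRank (p : Fin d → ℝ) : univ.map (sortedRank p) = range d := by
  rw [sortedRank, ← map_map, map_univ_equiv, Fin.map_valEmbedding_univ, Nat.Iio_eq_range]

theorem sortedDesc_mem {s : Set ℝ} {p : Fin d → ℝ} (hps : ∀ i, p i ∈ s) {k : ℕ} (hk : k < d) :
    sortedDesc p k ∈ s := by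
  simpa [sortedDesc, hk] using hps _

theorem sortedDesc_nonneg {p : Fin d → ℝ} (hp : ∀ i, 0 ≤ p i) (k : ℕ) : 0 ≤ sortedDesc p k := by
  unfold sortedDesc
  split_ifs
  exacts [hp _, le_rfl]

theorem sortedDesc_antitone {p : Fin d → ℝ} (hp : ∀ i, 0 ≤ p i) : Antitone (sortedDesc p) := by
  intro k l hkl
  by_cases hl : l < d
  · simpa [sortedDesc, hl, hkl.trans_lt hl] using
      antitone_comp_antitoneSort p (show (⟨k, hkl.trans_lt hl⟩ : Fin d) ≤ ⟨l, hl⟩ from hkl)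
  · simpa [sortedDesc, hl] using sortedDesc_nonneg hp k

theorem sum_sortedDesc_map (p : Fin d → ℝ) (g : ℝ → ℝ) (S : Finset (Fin d)) :
    ∑ k ∈ S.map (sortedRank p), g (sortedDesc p k) = ∑ i ∈ S, g (p i) := by
  simp [sortedDesc_sortedRank]

theorem sum_range_sortedDesc (p : Fin d → ℝ) (g : ℝ → ℝ) :
    ∑ k ∈ range d, g (sortedDesc p k) = ∑ i, g (p i) := by
  rw [← map_univ_sortedRank p, sum_sortedDesc_map]

theorem maxSum_eq_sum_range_sortedDesc {p : Fin d → ℝ} (hp : ∀ i, 0 ≤ p i) {k : ℕ} (hk : k ≤ d) :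
    maxSum p k = ∑ i ∈ range k, sortedDesc p i := by
  classical
  have hmap : (univ.map (sortedRank p)).filter (· < k) = range k := by
    rw [map_univ_sortedRank]
    ext i
    simp only [mem_filter, mem_range]
    omega
  rw [filter_map] at hmap
  refine IsGreatest.csSup_eq ⟨⟨univ.filter ((· < k) ∘ sortedRank p), ?_, ?_⟩, ?_⟩
  · rw [← card_map, hmap, card_range]
  · rw [← hmap]
    exact sum_sortedDesc_map p id _
  · rintro _ ⟨S, rfl, rfl⟩
    simpa using (sum_sortedDesc_map p id S).symm.trans_le
      ((sortedDesc_antitone hp).sum_le_sum_range_card _)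

theorem exists_sortedDesc_ne {p q : Fin d → ℝ} (h : ¬ ∃ σ : Equiv.Perm (Fin d), q = p ∘ σ) :
    ∃ k < d, sortedDesc p k ≠ sortedDesc q k := by
  by_contra! hpq
  refine h ⟨(antitoneSort q).symm.trans (antitoneSort p), funext fun j => ?_⟩
  have hj := hpq _ ((antitoneSort q).symm j).isLt
  simp only [sortedDesc, ((antitoneSort q).symm j).isLt, dif_pos, Fin.eta,
    Equiv.apply_symm_apply] at hj
  simpa using hj.symm

end DecreasingRearrangement

section Majorization

variable {d : ℕ} {p q : Fin d → ℝ}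

theorem Maj.sum_lt_sum_of_strictConvexOn {s : Set ℝ} {f : ℝ → ℝ} (hmaj : Maj p q)
    (hnoperm : ¬ ∃ σ : Equiv.Perm (Fin d), q = p ∘ σ) (hs : s ⊆ Set.Ici 0)
    (hf : StrictConvexOn ℝ s f) (hfd : ∀ a ∈ s, 0 < a → DifferentiableAt ℝ f a)
    (hps : ∀ i, p i ∈ s) (hqs : ∀ i, q i ∈ s) :
    ∑ i, f (p i) < ∑ i, f (q i) := by
  have hp (i : Fin d) : 0 ≤ p i := hs (hps i)
  have hq (i : Fin d) : 0 ≤ q i := hs (hqs i)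
  rw [← sum_range_sortedDesc p, ← sum_range_sortedDesc q]
  refine sum_lt_sum_of_partialSums hs hf hfd (sortedDesc_antitone hp)
    (fun i hi => sortedDesc_mem hps hi) (fun i hi => sortedDesc_mem hqs hi) (fun k hk => ?_) ?_
    (exists_sortedDesc_ne hnoperm)
  · rw [← maxSum_eq_sum_range_sortedDesc hp hk.le, ← maxSum_eq_sum_range_sortedDesc hq hk.le]
    exact hmaj.2 k
  · simpa using (sum_range_sortedDesc p id).trans (hmaj.1.trans (sum_range_sortedDesc q id).symm)

theorem IsProbVec.sum_rpow_pos_s19 (hp : IsProbVec p) (α : ℝ) : 0 < ∑ i, p i ^ α := by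
  obtain ⟨i, -, hi⟩ :=
    exists_lt_of_sum_lt (s := univ) (f := fun _ => (0 : ℝ)) (g := p) (by simp [hp.2])
  exact sum_pos' (fun i _ => Real.rpow_nonneg (hp.1 i) α)
    ⟨i, mem_univ i, Real.rpow_pos_of_pos hi α⟩

end Majorization

/-- Strict Schur concavity of the Rényi entropies for `α ∈ (-∞,0) ∪ (0,∞)`
and of `∑ i, log (p i)`. -/
theorem renyi_strict_schur_concavity
    (d : ℕ) (p q : Fin d → ℝ) (hp : IsProbVec p) (hq : IsProbVec q)
    (hmaj : Maj p q) (hnoperm : ¬ ∃ σ : Equiv.Perm (Fin d), q = p ∘ σ) :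
    (∀ α : ℝ, 0 < α → α ≠ 1 →
      (1 / (1 - α)) * Real.log (∑ i, (q i) ^ α) <
        (1 / (1 - α)) * Real.log (∑ i, (p i) ^ α)) ∧
    shannon q < shannon p ∧
    ((∀ i, 0 < p i) → (∀ i, 0 < q i) →
      (∀ α : ℝ, α < 0 →
        -((1 / (1 - α)) * Real.log (∑ i, (q i) ^ α)) <
          -((1 / (1 - α)) * Real.log (∑ i, (p i) ^ α))) ∧
      (∑ i, Real.log (q i) < ∑ i, Real.log (p i))) := by
  refine ⟨fun α hα0 hα1 => ?_, ?_, fun hp0 hq0 => ⟨fun α hα => ?_, ?_⟩⟩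
  · rcases hα1.lt_or_gt with hα1 | hα1
    · have hsum : ∑ i, q i ^ α < ∑ i, p i ^ α := by
        simpa using hmaj.sum_lt_sum_of_strictConvexOn hnoperm le_rfl
          (Real.strictConcaveOn_rpow hα0 hα1).neg
          (fun a _ ha => by fun_prop (disch := positivity)) hp.1 hq.1
      exact mul_lt_mul_of_pos_left (Real.log_lt_log (hq.sum_rpow_pos_s19 α) hsum)
        (one_div_pos.2 (sub_pos.2 hα1))
    · have hsum : ∑ i, p i ^ α < ∑ i, q i ^ α :=
        hmaj.sum_lt_sum_of_strictConvexOn hnoperm le_rfl (strictConvexOn_rpow hα1)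
          (fun a _ ha => by fun_prop (disch := positivity)) hp.1 hq.1
      exact mul_lt_mul_of_neg_left (Real.log_lt_log (hp.sum_rpow_pos_s19 α) hsum)
        (one_div_neg.2 (sub_neg.2 hα1))
  · simpa [shannon] using hmaj.sum_lt_sum_of_strictConvexOn hnoperm le_rfl
      Real.strictConvexOn_mul_log (fun a _ ha => by fun_prop (disch := positivity)) hp.1 hq.1
  · have hsum : ∑ i, p i ^ α < ∑ i, q i ^ α :=
      hmaj.sum_lt_sum_of_strictConvexOn hnoperm Set.Ioi_subset_Ici_self
        (strictConvexOn_rpow_of_neg hα) (fun a _ ha => by fun_prop (disch := positivity)) hp0 hq0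
    exact neg_lt_neg (mul_lt_mul_of_pos_left (Real.log_lt_log (hp.sum_rpow_pos_s19 α) hsum)
      (one_div_pos.2 (by linarith)))
  · simpa using hmaj.sum_lt_sum_of_strictConvexOn hnoperm Set.Ioi_subset_Ici_self
      strictConcaveOn_log_Ioi.neg (fun a _ ha => by fun_prop (disch := positivity)) hp0 hq0
end
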